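/- Let v: ℝ → ℝ be a smooth positive 2π-periodic function and define Q(θ) = (1/9) v(θ)^{5/3} (16 v''''(θ) + 40 v''(θ) + 9 v(θ)). Then ∫₀^{2π} Q'(θ) v(θ)^{-2/3} cos θ dθ = 0 and ∫₀^{2π} Q'(θ) v(θ)^{-2/3} sin θ dθ = 0. -/

import Mathlib

open Real intervalIntegral

lemma periodic_deriv' (f : ℝ → ℝ) (c : ℝ) (h : Function.Periodic f c) :
    Function.Periodic (deriv f) c := by
  intro x
  have hf : (fun y => f (y + c)) = f := funext h
  rw [← deriv_comp_add_const f c x, hf]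

lemma aux_int (v : ℝ → ℝ) (hv : ContDiff ℝ (⊤ : ℕ∞) v) (hpos : ∀ θ, 0 < v θ)
    (hper : Function.Periodic v (2 * Real.pi)) (Q : ℝ → ℝ)
    (hQ : ∀ θ, Q θ = (1/9) * v θ ^ ((5:ℝ)/3) *
      (16 * iteratedDeriv 4 v θ + 40 * iteratedDeriv 2 v θ + 9 * v θ))
    (f g : ℝ → ℝ)
    (hf' : ∀ θ, HasDerivAt f (-(g θ)) θ) (hg' : ∀ θ, HasDerivAt g (f θ) θ)
    (hfp : f (2 * Real.pi) = f 0) (hgp : g (2 * Real.pi) = g 0) :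
    (∫ θ in (0:ℝ)..(2 * Real.pi),
        deriv Q θ * v θ ^ (-(2:ℝ)/3) * f θ) = 0 := by
  set w : ℕ → ℝ → ℝ := fun n => iteratedDeriv n v with hwdef
  have hdiff : ∀ n, Differentiable ℝ (w n) := fun n =>
    hv.differentiable_iteratedDeriv n (by exact_mod_cast WithTop.coe_lt_top _)
  have hw : ∀ n θ, HasDerivAt (w n) (w (n+1) θ) θ := by
    intro n θ
    have h1 := ((hdiff n) θ).hasDerivAt
    rwa [show w (n+1) θ = deriv (w n) θ by rw [hwdef]; simp [iteratedDeriv_succ]]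
  have hv' : ∀ θ, HasDerivAt v (w 1 θ) θ := by
    intro θ
    have h0 := hw 0 θ
    rwa [show w 0 = v by simp [hwdef, iteratedDeriv_zero]] at h0
  have hQ' : ∀ θ, HasDerivAt Q
      ((1/9) * (w 1 θ * ((5:ℝ)/3) * v θ ^ ((5:ℝ)/3 - 1)) *
        (16 * w 4 θ + 40 * w 2 θ + 9 * v θ) +
       (1/9) * v θ ^ ((5:ℝ)/3) * (16 * w 5 θ + 40 * w 3 θ + 9 * w 1 θ)) θ := by
    intro θ
    have h1 : HasDerivAt (fun t => v t ^ ((5:ℝ)/3))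
        (w 1 θ * ((5:ℝ)/3) * v θ ^ ((5:ℝ)/3 - 1)) θ :=
      (hv' θ).rpow_const (Or.inl (hpos θ).ne')
    have h2 : HasDerivAt (fun t => 16 * w 4 t + 40 * w 2 t + 9 * v t)
        (16 * w 5 θ + 40 * w 3 θ + 9 * w 1 θ) θ :=
      (((hw 4 θ).const_mul 16).add ((hw 2 θ).const_mul 40)).add ((hv' θ).const_mul 9)
    have h3 := (h1.const_mul (1/9 : ℝ)).mul h2
    have hQeq : Q = fun t => (1/9 : ℝ) * v t ^ ((5:ℝ)/3) *
        (16 * w 4 t + 40 * w 2 t + 9 * v t) := funext hQ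
    rw [hQeq]
    exact h3
  set P : ℝ → ℝ := fun t => (1/27 : ℝ) *
      (f t * (48 * (v t * w 4 t) + 32 * (w 1 t * w 3 t) - 16 * (w 2 t * w 2 t)
        + 72 * (v t * w 2 t) + 72 * (w 1 t * w 1 t))
      + g t * (48 * (v t * w 3 t) - 16 * (w 1 t * w 2 t) + 72 * (v t * w 1 t))) with hPdef
  have hP : ∀ θ, HasDerivAt P (deriv Q θ * v θ ^ (-(2:ℝ)/3) * f θ) θ := by
    intro θ
    have hC : HasDerivAt (fun t => 48 * (v t * w 4 t) + 32 * (w 1 t * w 3 t)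
        - 16 * (w 2 t * w 2 t) + 72 * (v t * w 2 t) + 72 * (w 1 t * w 1 t))
        (48 * (w 1 θ * w 4 θ + v θ * w 5 θ) + 32 * (w 2 θ * w 3 θ + w 1 θ * w 4 θ)
         - 16 * (w 3 θ * w 2 θ + w 2 θ * w 3 θ) + 72 * (w 1 θ * w 2 θ + v θ * w 3 θ)
         + 72 * (w 2 θ * w 1 θ + w 1 θ * w 2 θ)) θ :=
      (((((((hv' θ).mul (hw 4 θ)).const_mul 48).add
        (((hw 1 θ).mul (hw 3 θ)).const_mul 32)).sub
        (((hw 2 θ).mul (hw 2 θ)).const_mul 16)).add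
        (((hv' θ).mul (hw 2 θ)).const_mul 72)).add
        (((hw 1 θ).mul (hw 1 θ)).const_mul 72))
    have hS : HasDerivAt (fun t => 48 * (v t * w 3 t) - 16 * (w 1 t * w 2 t)
        + 72 * (v t * w 1 t))
        (48 * (w 1 θ * w 3 θ + v θ * w 4 θ) - 16 * (w 2 θ * w 2 θ + w 1 θ * w 3 θ)
         + 72 * (w 1 θ * w 1 θ + v θ * w 2 θ)) θ :=
      ((((hv' θ).mul (hw 3 θ)).const_mul 48).sub
        (((hw 1 θ).mul (hw 2 θ)).const_mul 16)).add
        (((hv' θ).mul (hw 1 θ)).const_mul 72)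
    have hPc := (((hf' θ).mul hC).add ((hg' θ).mul hS)).const_mul (1/27 : ℝ)
    rw [hPdef]
    convert hPc using 1
    · rfl
    · rfl
    · rfl
    rw [(hQ' θ).deriv]
    have e1 : v θ ^ ((5:ℝ)/3 - 1) * v θ ^ (-(2:ℝ)/3) = 1 := by
      rw [← Real.rpow_add (hpos θ)]
      norm_num
    have e2 : v θ ^ ((5:ℝ)/3) * v θ ^ (-(2:ℝ)/3) = v θ := by
      rw [← Real.rpow_add (hpos θ)]
      norm_num
    linear_combination
      ((1/9) * (w 1 θ * ((5:ℝ)/3)) * (16 * w 4 θ + 40 * w 2 θ + 9 * v θ) * f θ) * e1 +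
      ((1/9) * (16 * w 5 θ + 40 * w 3 θ + 9 * w 1 θ) * f θ) * e2
  -- integrability
  have hcw : ∀ n, Continuous (w n) := fun n => (hdiff n).continuous
  have hcv : Continuous v := hv.continuous
  have hrp : ∀ p : ℝ, Continuous (fun θ => v θ ^ p) := fun p =>
    hcv.rpow_const (fun x => Or.inl (hpos x).ne')
  have hdf : Differentiable ℝ f := fun θ => (hf' θ).differentiableAt
  have hcf : Continuous f := hdf.continuous
  have heq : (fun θ => deriv Q θ * v θ ^ (-(2:ℝ)/3) * f θ)
      = fun θ => ((1/9) * (w 1 θ * ((5:ℝ)/3) * v θ ^ ((5:ℝ)/3 - 1)) *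
        (16 * w 4 θ + 40 * w 2 θ + 9 * v θ) +
       (1/9) * v θ ^ ((5:ℝ)/3) * (16 * w 5 θ + 40 * w 3 θ + 9 * w 1 θ))
          * v θ ^ (-(2:ℝ)/3) * f θ := by
    funext θ
    rw [(hQ' θ).deriv]
  have hcont : Continuous (fun θ => ((1/9) * (w 1 θ * ((5:ℝ)/3) * v θ ^ ((5:ℝ)/3 - 1)) *
        (16 * w 4 θ + 40 * w 2 θ + 9 * v θ) +
       (1/9) * v θ ^ ((5:ℝ)/3) * (16 * w 5 θ + 40 * w 3 θ + 9 * w 1 θ))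
          * v θ ^ (-(2:ℝ)/3) * f θ) := by
    refine Continuous.mul (Continuous.mul ?_ (hrp _)) hcf
    exact ((continuous_const.mul (((hcw 1).mul continuous_const).mul (hrp _))).mul
        (((continuous_const.mul (hcw 4)).add (continuous_const.mul (hcw 2))).add
          (continuous_const.mul hcv))).add
      ((continuous_const.mul (hrp _)).mul
        (((continuous_const.mul (hcw 5)).add (continuous_const.mul (hcw 3))).add
          (continuous_const.mul (hcw 1))))
  have hInt : IntervalIntegrable (fun θ => deriv Q θ * v θ ^ (-(2:ℝ)/3) * f θ)
      MeasureTheory.volume 0 (2 * Real.pi) := by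
    rw [heq]
    exact hcont.intervalIntegrable _ _
  have hkey := intervalIntegral.integral_eq_sub_of_hasDerivAt
      (a := 0) (b := 2 * Real.pi) (fun x _ => hP x) hInt
  rw [hkey]
  have hpw : ∀ n, w n (2 * Real.pi) = w n 0 := by
    intro n
    have hpn : Function.Periodic (w n) (2 * Real.pi) := by
      rw [hwdef]
      induction n with
      | zero => simpa [iteratedDeriv_zero] using hper
      | succ k ih =>
        show Function.Periodic (iteratedDeriv (k+1) v) (2 * Real.pi)
        rw [iteratedDeriv_succ]
        exact periodic_deriv' _ _ ih
    simpa using hpn 0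
  have hvp : v (2 * Real.pi) = v 0 := by simpa using hper 0
  rw [hPdef]
  simp only
  rw [hpw 1, hpw 2, hpw 3, hpw 4, hvp, hfp, hgp]
  ring

theorem stmt2 (v : ℝ → ℝ) (hv : ContDiff ℝ (⊤ : ℕ∞) v) (hpos : ∀ θ, 0 < v θ)
    (hper : Function.Periodic v (2 * Real.pi)) (Q : ℝ → ℝ)
    (hQ : ∀ θ, Q θ = (1/9) * v θ ^ ((5:ℝ)/3) *
      (16 * iteratedDeriv 4 v θ + 40 * iteratedDeriv 2 v θ + 9 * v θ)) :
    (∫ θ in (0:ℝ)..(2 * Real.pi),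
        deriv Q θ * v θ ^ (-(2:ℝ)/3) * Real.cos θ) = 0 ∧
    (∫ θ in (0:ℝ)..(2 * Real.pi),
        deriv Q θ * v θ ^ (-(2:ℝ)/3) * Real.sin θ) = 0 := by
  constructor
  · exact aux_int v hv hpos hper Q hQ Real.cos Real.sin
      (fun θ => Real.hasDerivAt_cos θ) (fun θ => Real.hasDerivAt_sin θ)
      (by simp) (by simp)
  · exact aux_int v hv hpos hper Q hQ Real.sin (fun t => -Real.cos t)
      (fun θ => by simpa using Real.hasDerivAt_sin θ)
      (fun θ => by have h := (Real.hasDerivAt_cos θ).neg; simp only [neg_neg] at h; exact h)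
      (by simp) (by simp)
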